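/- arXiv:1010.1251 — 6 statements merged into one kernel-verified Lean document; each statement's English description precedes it below -/
import Mathlib

section
/- Let W be a closed subspace of a real Hilbert space H, let F : H → ℝ be a functional of the form F(v) = J(v) − L(v), where L is a bounded linear functional and J is twice Gateaux differentiable with second derivative satisfying c_A‖h‖² ≤ J''(v)[h,h] ≤ C_A‖h‖² for all v, h ∈ H with constants 0 < c_A ≤ C_A. If w ∈ W minimizes F over W, then for all v ∈ W: (c_A/2)‖v − w‖² ≤ F(v) − F(w) ≤ (C_A/2)‖v − w‖². -/
/-! Along the segment `t ↦ w + t • (v - w)` the function `g t = F (w + t • (v - w))` has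
`g' 0 = 0` (since `w` minimizes `F` on the subspace containing the segment) and
`c_A ‖v - w‖² ≤ g'' ≤ C_A ‖v - w‖²`. Comparing `g` with the quadratics `a t² / 2` for these
bounds `a` via monotonicity twice (first of `g' t - a t`, then of `g t - a t² / 2`) gives the
estimate at `t = 1`. -/

section OneDimensional

variable {g g' g'' : ℝ → ℝ} {a x : ℝ}

theorem half_mul_sq_le_sub_of_le_second_deriv (hg : ∀ t, HasDerivAt g (g' t) t)
    (hg' : ∀ t, HasDerivAt g' (g'' t) t) (h0 : g' 0 = 0) (ha : ∀ t, a ≤ g'' t) (hx : 0 ≤ x) :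
    a / 2 * x ^ 2 ≤ g x - g 0 := by
  have hslope : ∀ t, HasDerivAt (fun t => g' t - a * t) (g'' t - a) t := fun t =>
    (hg' t).sub ((hasDerivAt_id' t).const_mul a) |>.congr_deriv (by ring)
  have hslope_mono : Monotone fun t => g' t - a * t :=
    monotone_of_hasDerivAt_nonneg hslope fun t => sub_nonneg.2 (ha t)
  have hgap : ∀ t, HasDerivAt (fun t => g t - a / 2 * t ^ 2) (g' t - a * t) t := fun t =>
    (hg t).sub ((hasDerivAt_pow 2 t).const_mul (a / 2)) |>.congr_deriv (by push_cast; ring)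
  have hgap_mono : MonotoneOn (fun t => g t - a / 2 * t ^ 2) (Set.Ici 0) := by
    refine monotoneOn_of_hasDerivWithinAt_nonneg (convex_Ici 0)
      (fun t _ => (hgap t).continuousAt.continuousWithinAt)
      (fun t _ => (hgap t).hasDerivWithinAt) fun t ht => ?_
    rw [interior_Ici] at ht
    simpa [h0] using hslope_mono (le_of_lt ht)
  have := hgap_mono Set.self_mem_Ici hx hx
  linarith

theorem sub_le_half_mul_sq_of_second_deriv_le (hg : ∀ t, HasDerivAt g (g' t) t)
    (hg' : ∀ t, HasDerivAt g' (g'' t) t) (h0 : g' 0 = 0) (ha : ∀ t, g'' t ≤ a) (hx : 0 ≤ x) :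
    g x - g 0 ≤ a / 2 * x ^ 2 := by
  have := half_mul_sq_le_sub_of_le_second_deriv (g := -g) (g' := -g') (g'' := -g'') (a := -a)
    (fun t => (hg t).neg) (fun t => (hg' t).neg) (by simp [h0]) (fun t => neg_le_neg (ha t)) hx
  simp only [Pi.neg_apply] at this
  linarith

end OneDimensional

theorem HasFDerivAt.hasDerivAt_comp_add_smul {E G : Type*} [NormedAddCommGroup E]
    [NormedSpace ℝ E] [NormedAddCommGroup G] [NormedSpace ℝ G] {f : E → G} {f' : E →L[ℝ] G}
    {w e : E} {t : ℝ} (hf : HasFDerivAt f f' (w + t • e)) :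
    HasDerivAt (fun t : ℝ => f (w + t • e)) (f' e) t :=
  hf.comp_hasDerivAt t (by simpa using ((hasDerivAt_id t).smul_const e).const_add w)

theorem stmt3_general {H : Type*} [NormedAddCommGroup H] [InnerProductSpace ℝ H]
    (W : Submodule ℝ H)
    (J F : H → ℝ) (L : H →L[ℝ] ℝ)
    (hF : ∀ v, F v = J v - L v)
    (J' : H → H →L[ℝ] ℝ) (J'' : H → H →L[ℝ] H →L[ℝ] ℝ)
    (hJ' : ∀ v, HasFDerivAt J (J' v) v)
    (hJ'' : ∀ v, HasFDerivAt J' (J'' v) v)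
    (c_A C_A : ℝ)
    (hell : ∀ v h, c_A * ‖h‖^2 ≤ J'' v h h ∧ J'' v h h ≤ C_A * ‖h‖^2)
    (w : H) (hw : w ∈ W) (hmin : ∀ v ∈ W, F w ≤ F v) :
    ∀ v ∈ W, c_A/2 * ‖v - w‖^2 ≤ F v - F w ∧ F v - F w ≤ C_A/2 * ‖v - w‖^2 := by
  intro v hv
  set e := v - w
  have hg : ∀ t : ℝ, HasDerivAt (fun t => F (w + t • e)) (J' (w + t • e) e - L e) t := fun t => by
    simp only [hF]
    exact (hJ' _).hasDerivAt_comp_add_smul.sub L.hasFDerivAt.hasDerivAt_comp_add_smul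
  have hg' : ∀ t : ℝ,
      HasDerivAt (fun t => J' (w + t • e) e - L e) (J'' (w + t • e) e e) t := fun t => by
    simpa using ((hJ'' _).hasDerivAt_comp_add_smul.clm_apply
      (hasDerivAt_const t e)).sub_const (L e)
  have hcrit : J' (w + (0 : ℝ) • e) e - L e = 0 := by
    refine IsLocalMin.hasDerivAt_eq_zero (Filter.Eventually.of_forall fun t => ?_) (hg 0)
    simpa using hmin _ (W.add_mem hw (W.smul_mem t (W.sub_mem hv hw)))
  have hv_eq : w + (1 : ℝ) • e = v := by simp [e]
  have hlow := half_mul_sq_le_sub_of_le_second_deriv hg hg' hcrit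
    (fun t => (hell _ e).1) zero_le_one
  have hupp := sub_le_half_mul_sq_of_second_deriv_le hg hg' hcrit
    (fun t => (hell _ e).2) zero_le_one
  simp only [hv_eq, zero_smul, add_zero, one_pow, mul_one] at hlow hupp
  exact ⟨by linarith, by linarith⟩

/-- If `F = J - L` with `L` bounded linear and `J` twice differentiable with
`c_A‖h‖² ≤ J''(v)[h,h] ≤ C_A‖h‖²`, and `w` minimizes `F` over a closed subspace `W`,
then `(c_A/2)‖v-w‖² ≤ F(v) - F(w) ≤ (C_A/2)‖v-w‖²` for all `v ∈ W`. -/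
theorem stmt3 {H : Type*} [NormedAddCommGroup H] [InnerProductSpace ℝ H] [CompleteSpace H]
    (W : Submodule ℝ H) (hW : IsClosed (W : Set H))
    (J F : H → ℝ) (L : H →L[ℝ] ℝ)
    (hF : ∀ v, F v = J v - L v)
    (J' : H → H →L[ℝ] ℝ) (J'' : H → H →L[ℝ] H →L[ℝ] ℝ)
    (hJ' : ∀ v, HasFDerivAt J (J' v) v)
    (hJ'' : ∀ v, HasFDerivAt J' (J'' v) v)
    (c_A C_A : ℝ) (hc : 0 < c_A) (hcC : c_A ≤ C_A)
    (hell : ∀ v h, c_A * ‖h‖^2 ≤ J'' v h h ∧ J'' v h h ≤ C_A * ‖h‖^2)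
    (w : H) (hw : w ∈ W) (hmin : ∀ v ∈ W, F w ≤ F v) :
    ∀ v ∈ W, c_A/2 * ‖v - w‖^2 ≤ F v - F w ∧ F v - F w ≤ C_A/2 * ‖v - w‖^2 :=
  stmt3_general W J F L hF J' J'' hJ' hJ'' c_A C_A hell w hw hmin
end

section
/- Let H be a real Hilbert space, W a closed subspace, and F : H → ℝ a functional such that for the minimizer U of F over W and any V ∈ W: (c_A/2)‖V − U‖² ≤ F(V) − F(U) ≤ (C_A/2)‖V − U‖², and similarly for the global minimizer u of F over H: (c_A/2)‖v − u‖² ≤ F(v) − F(u) ≤ (C_A/2)‖v − u‖² for all v ∈ H. Then the quasi-orthogonality property holds: ‖U − u‖² + ‖U − V‖² ≤ (C_A/c_A)‖V − u‖² for all V ∈ W. -/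
/-- Quasi-orthogonality: if energy differences of `F` are two-sided equivalent to squared
norms both on the subspace `W` (around the discrete minimizer `U`) and globally (around
the minimizer `u`), then `‖U-u‖² + ‖U-V‖² ≤ (C_A/c_A)‖V-u‖²` for all `V ∈ W`. -/
theorem stmt5 {H : Type*} [NormedAddCommGroup H] [InnerProductSpace ℝ H]
    (W : Submodule ℝ H) (hW : IsClosed (W : Set H))
    (F : H → ℝ) (c_A C_A : ℝ) (hc : 0 < c_A) (hcC : c_A ≤ C_A)
    (U u : H) (hU : U ∈ W)
    (hUeq : ∀ V ∈ W, c_A/2 * ‖V - U‖^2 ≤ F V - F U ∧ F V - F U ≤ C_A/2 * ‖V - U‖^2)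
    (hueq : ∀ v : H, c_A/2 * ‖v - u‖^2 ≤ F v - F u ∧ F v - F u ≤ C_A/2 * ‖v - u‖^2) :
    ∀ V ∈ W, ‖U - u‖^2 + ‖U - V‖^2 ≤ (C_A / c_A) * ‖V - u‖^2 := by
  intro V hV
  have h1 := (hueq U).1
  have h2 := (hUeq V hV).1
  have h3 := (hueq V).2
  have hn : ‖U - V‖ = ‖V - U‖ := norm_sub_rev _ _
  rw [hn]
  have hsum : c_A/2 * ‖U - u‖^2 + c_A/2 * ‖V - U‖^2 ≤ C_A/2 * ‖V - u‖^2 := by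
    linarith
  rw [div_mul_eq_mul_div, le_div_iff₀ hc]
  nlinarith
end

section
/- Let η, ηR, E, osc, osc*, err, err* ≥ 0 and positive constants C_L, C_LU, C_E with C_E > 1. Suppose: (global lower bound) C_L η² ≤ err² + osc²; (error reduction) err*² + osc*² ≤ ν(err² + osc²) where ν = (1/2)(1 − θ²/θ₀²) for some 0 < θ < θ₀ := (C_L/(1 + 2C_LU(1 + C_E)))^{1/2}; (triangle-type bound) err² − 2 err*² ≤ 2E²; (oscillation comparison) osc² − 2 osc*² ≤ 2C_E E² + ηR²; and (localized upper bound) E² ≤ C_LU ηR². Then ηR ≥ θ η. -/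
set_option maxHeartbeats 1000000


/-- Arithmetic skeleton of the optimal marking lemma: under the global lower bound,
error reduction, triangle-type bound, oscillation comparison and localized upper bound,
the estimator on refined elements satisfies Dörfler's property `ηR ≥ θ η`. -/
theorem stmt8 (η ηR E osc oscs err errs : ℝ)
    (hη : 0 ≤ η) (hηR : 0 ≤ ηR) (hE : 0 ≤ E) (hosc : 0 ≤ osc) (hoscs : 0 ≤ oscs)
    (herr : 0 ≤ err) (herrs : 0 ≤ errs)
    (C_L C_LU C_E θ θ₀ ν : ℝ) (hCL : 0 < C_L) (hCLU : 0 < C_LU) (hCE : 1 < C_E)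
    (hθ₀ : θ₀ = Real.sqrt (C_L / (1 + 2*C_LU*(1+C_E))))
    (hθpos : 0 < θ) (hθlt : θ < θ₀)
    (hν : ν = 1/2 * (1 - θ^2/θ₀^2))
    (hlower : C_L * η^2 ≤ err^2 + osc^2)
    (hred : errs^2 + oscs^2 ≤ ν * (err^2 + osc^2))
    (htri : err^2 - 2*errs^2 ≤ 2*E^2)
    (hosccomp : osc^2 - 2*oscs^2 ≤ 2*C_E*E^2 + ηR^2)
    (hloc : E^2 ≤ C_LU * ηR^2) :
    θ * η ≤ ηR := by
  have hD : (0:ℝ) < 1 + 2*C_LU*(1+C_E) := by nlinarith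
  have hθ₀sq : θ₀^2 = C_L / (1 + 2*C_LU*(1+C_E)) := by
    rw [hθ₀, Real.sq_sqrt (by positivity)]
  have hθ₀pos : 0 < θ₀ := hθpos.trans hθlt
  have hkey : C_L * (1 - 2*ν) = θ^2 * (1 + 2*C_LU*(1+C_E)) := by
    rw [hν, hθ₀sq]; field_simp; ring
  have hνnonneg : 0 ≤ 1 - 2*ν := by
    rw [hν]
    have h5 : θ^2/θ₀^2 ≤ 1 := by
      rw [div_le_one (by positivity)]
      nlinarith
    have h6 : 0 ≤ θ^2/θ₀^2 := by positivity
    linarith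
  have hmul : (1+C_E) * E^2 ≤ (1+C_E) * (C_LU * ηR^2) :=
    mul_le_mul_of_nonneg_left hloc (by linarith)
  have h1 : (1 - 2*ν) * (err^2 + osc^2) ≤ (1 + 2*C_LU*(1+C_E)) * ηR^2 := by linarith
  have h2 : (1 - 2*ν) * (C_L * η^2) ≤ (1 - 2*ν) * (err^2 + osc^2) :=
    mul_le_mul_of_nonneg_left hlower hνnonneg
  have h3 : θ^2 * η^2 ≤ ηR^2 := by
    have h4 := h2.trans h1
    rw [show (1-2*ν)*(C_L*η^2) = (C_L*(1-2*ν))*η^2 by ring, hkey] at h4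
    have h5 : (1+2*C_LU*(1+C_E)) * (θ^2*η^2) ≤ (1+2*C_LU*(1+C_E)) * ηR^2 := by linarith
    exact le_of_mul_le_mul_left h5 hD
  calc θ * η = Real.sqrt ((θ*η)^2) := (Real.sqrt_sq (mul_nonneg hθpos.le hη)).symm
    _ ≤ Real.sqrt (ηR^2) := Real.sqrt_le_sqrt (by nlinarith)
    _ = ηR := Real.sqrt_sq hηR
end

section
/- Let (E_k)_{k∈ℕ} and (η_k)_{k∈ℕ} be sequences of nonnegative reals, μ > 0, C_E > 1, c_A > 0, C_U > 0, C_a > 0, 0 < ξ ≤ 1, 0 < θ < 1. Suppose for every k: η_{k+1}² ≤ (1+δ)(η_k² − ξ θ² η_k²) + (1+δ⁻¹)C_E d_k² for all δ > 0 (where d_k ≥ 0 satisfies (c_A/2)d_k² ≤ E_k − E_{k+1}), and E_k ≤ (C_A/2) C_U η_k² for a constant C_A > 0. Then there exist ρ ∈ (0,1) and μ > 0 such that E_{k+1} + μ η_{k+1}² ≤ ρ²(E_k + μ η_k²) for all k. -/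
set_option maxHeartbeats 800000


/-- Arithmetic core of the contraction property: from the estimator reduction, the
quasi-orthogonality and the global upper bound one obtains a contraction of the
total quantity `E_k + μ η_k²`. -/
theorem stmt9 (E η d : ℕ → ℝ) (c_A C_A C_U C_E ξ θ : ℝ)
    (hE : ∀ k, 0 ≤ E k) (hη : ∀ k, 0 ≤ η k) (hd : ∀ k, 0 ≤ d k)
    (hcA : 0 < c_A) (hCA : 0 < C_A) (hCU : 0 < C_U) (hCE : 1 < C_E)
    (hξ : 0 < ξ) (hξ1 : ξ ≤ 1) (hθ : 0 < θ) (hθ1 : θ < 1)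
    (hest : ∀ k, ∀ δ > (0:ℝ),
      η (k+1)^2 ≤ (1+δ) * (η k^2 - ξ * θ^2 * η k^2) + (1+δ⁻¹) * C_E * (d k)^2)
    (hortho : ∀ k, c_A/2 * (d k)^2 ≤ E k - E (k+1))
    (hupper : ∀ k, E k ≤ C_A/2 * C_U * η k^2) :
    ∃ ρ μ : ℝ, 0 < ρ ∧ ρ < 1 ∧ 0 < μ ∧
      ∀ k, E (k+1) + μ * η (k+1)^2 ≤ ρ^2 * (E k + μ * η k^2) := by
  set a : ℝ := ξ * θ^2 / 2 with ha_def
  have ha : 0 < a := by positivity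
  have ha2 : a ≤ 1/2 := by nlinarith [sq_nonneg θ]
  have hxiθ : ξ * θ^2 = 2 * a := by rw [ha_def]; ring
  set μ : ℝ := min (c_A/(2*(1+a⁻¹)*C_E)) (C_A*C_U/(8*(1+a)*a)) with hμ_def
  have hainv : 0 < 1 + a⁻¹ := by positivity
  have hμpos : 0 < μ := lt_min (by positivity) (by positivity)
  set b : ℝ := 2*μ*(1+a)*a/(C_A*C_U) with hb_def
  have hbpos : 0 < b := by positivity
  have hb' : b * (C_A*C_U) = 2*μ*(1+a)*a := by
    rw [hb_def]; field_simp
  have hble : b ≤ 1/4 := by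
    have h1 : μ ≤ C_A*C_U/(8*(1+a)*a) := min_le_right _ _
    rw [le_div_iff₀ (by positivity)] at h1
    rw [hb_def, div_le_iff₀ (by positivity)]
    nlinarith
  have hμCE : μ * ((1+a⁻¹) * C_E) ≤ c_A/2 := by
    have h1 : μ ≤ c_A/(2*(1+a⁻¹)*C_E) := min_le_left _ _
    rw [le_div_iff₀ (by positivity)] at h1
    nlinarith
  set ρsq : ℝ := max (1-b) (1-a^2) with hρsq_def
  have hρsqpos : 0 < ρsq := lt_max_of_lt_left (by linarith)
  have hρsqlt : ρsq < 1 := max_lt (by linarith) (by nlinarith)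
  have hr1 : 1 - b ≤ ρsq := le_max_left _ _
  have hr2 : 1 - a^2 ≤ ρsq := le_max_right _ _
  clear_value a μ b ρsq
  refine ⟨Real.sqrt ρsq, μ, Real.sqrt_pos.mpr hρsqpos, ?_, hμpos, ?_⟩
  · have := Real.sqrt_lt_sqrt (le_of_lt hρsqpos) hρsqlt
    simpa using this.trans_le (by rw [Real.sqrt_one])
  · intro k
    rw [Real.sq_sqrt (le_of_lt hρsqpos)]
    have H1 := hest k a ha
    have H2 := hortho k
    have H3 := hupper k
    have hμd : μ * ((1+a⁻¹) * C_E * (d k)^2) ≤ c_A/2 * (d k)^2 := by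
      have := mul_le_mul_of_nonneg_right hμCE (sq_nonneg (d k))
      nlinarith
    have key : μ * η (k+1)^2 ≤ μ * ((1+a) * (1 - 2*a)) * η k ^2 + (E k - E (k+1)) := by
      have h := mul_le_mul_of_nonneg_left H1 (le_of_lt hμpos)
      have e1 : μ * ((1+a) * (η k^2 - ξ * θ^2 * η k^2) + (1+a⁻¹) * C_E * (d k)^2)
          = μ * ((1+a) * (1 - 2*a)) * η k ^2 + μ * ((1+a⁻¹) * C_E * (d k)^2) := by
        rw [hxiθ]; ring
      rw [e1] at h
      linarith
    have hbE : b * E k ≤ μ * (1+a) * a * η k ^2 := by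
      calc b * E k ≤ b * (C_A/2 * C_U * η k^2) :=
            mul_le_mul_of_nonneg_left H3 (le_of_lt hbpos)
        _ = (b * (C_A*C_U)) * η k^2 / 2 := by ring
        _ = μ * (1+a) * a * η k ^2 := by rw [hb']; ring
    have hEk := hE k
    have hηk := sq_nonneg (η k)
    have A : (1-b) * E k ≤ ρsq * E k := mul_le_mul_of_nonneg_right hr1 hEk
    have B : (1-a^2) * (μ * η k^2) ≤ ρsq * (μ * η k^2) :=
      mul_le_mul_of_nonneg_right hr2 (mul_nonneg (le_of_lt hμpos) hηk)
    linarith [key, hbE, A, B]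
end

section
/- Suppose the total error satisfies the ideal approximation property: for every ε > 0 there exists a mesh T_ε with #T_ε − #T₀ ≤ |u|_s^{1/s} ε^{−1/s} and total error at most ε², and suppose: (i) the overlay T* = T_ε ⊕ T_k satisfies #T* ≤ #T_ε + #T_k − #T₀; (ii) Cea's lemma for the total error holds with constant 2C_E C_A/c_A; and (iii) if the total error on T* is at most ν times the total error on T_k (with ν ∈ (0,1)), then the estimator on the refined elements R_k satisfies Dörfler's property with parameter θ, and M_k is a minimal Dörfler set so #M_k ≤ #R_k ≤ #T* − #T_k. Then #M_k ≤ (2C_E C_A/(ν c_A))^{1/(2s)} |u|_s^{1/s} · (total error on T_k)^{−1/(2s)}. -/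
/-- Cardinality of the marked set: under the ideal approximation property of class
`𝔸_s`, the overlay bound, Cea's lemma for the total error, and the optimal marking
property with minimal Dörfler sets, the number of marked elements is bounded by
`(2C_E C_A/(ν c_A))^{1/(2s)} |u|_s^{1/s} (total error)^{-1/(2s)}`. -/
theorem stmt15 {Mesh : Type*} (card : Mesh → ℕ) (T0 Tk : Mesh)
    (overlay : Mesh → Mesh → Mesh) (refines : Mesh → Mesh → Prop)
    (toterr besterr : Mesh → ℝ)
    (usn s c_A C_A C_E ν : ℝ) (Mk : ℕ)
    (hs : 0 < s) (husn : 0 ≤ usn) (hcA : 0 < c_A) (hCA : 0 < C_A) (hCE : 1 < C_E)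
    (hν0 : 0 < ν) (hν1 : ν < 1)
    (hbest : ∀ T, 0 ≤ besterr T) (htot : 0 < toterr Tk)
    -- ideal approximation property (u ∈ 𝔸_s)
    (happrox : ∀ ε > (0:ℝ), ∃ Tε : Mesh,
      ((card Tε : ℝ) - card T0) ≤ usn ^ ((1:ℝ)/s) * ε ^ (-(1:ℝ)/s) ∧
      besterr Tε ≤ ε^2)
    -- (i) overlay complexity and refinement
    (hoverlay : ∀ T T', (card (overlay T T') : ℝ) ≤ (card T : ℝ) + card T' - card T0)
    (hoverlay_ref : ∀ T T', refines T' (overlay T T'))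
    -- (ii) Cea's lemma for the total error: the Galerkin total error of the overlay is
    -- controlled by the best total error on the coarser mesh
    (hcea : ∀ T T', toterr (overlay T T') ≤ (2 * C_E * C_A / c_A) * besterr T)
    -- (iii) optimal marking: total-error reduction by factor ν forces Dörfler's
    -- property, and Mk is a minimal Dörfler set
    (hmark : ∀ T : Mesh, refines Tk T → toterr T ≤ ν * toterr Tk →
      (Mk : ℝ) ≤ (card T : ℝ) - card Tk) :
    (Mk : ℝ) ≤ (2 * C_E * C_A / (ν * c_A)) ^ ((1:ℝ)/(2*s)) * usn ^ ((1:ℝ)/s) *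
      (toterr Tk) ^ (-(1:ℝ)/(2*s)) := by

  set K := 2 * C_E * C_A / c_A with hKdef
  have hK : 0 < K := by positivity
  set e2 := ν * toterr Tk / K with he2def
  have he2 : 0 < e2 := by positivity
  set ε := Real.sqrt e2 with hεdef
  have hε : 0 < ε := Real.sqrt_pos.mpr he2
  have hsq : ε ^ 2 = e2 := Real.sq_sqrt he2.le
  obtain ⟨Tε, hcard, hbesterr⟩ := happrox ε hε
  have hTred : toterr (overlay Tε Tk) ≤ ν * toterr Tk := by
    calc toterr (overlay Tε Tk) ≤ K * besterr Tε := hcea Tε Tk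
      _ ≤ K * ε ^ 2 := by nlinarith [hbest Tε]
      _ = ν * toterr Tk := by rw [hsq, he2def]; field_simp
  have hMk : (Mk : ℝ) ≤ (card (overlay Tε Tk) : ℝ) - card Tk :=
    hmark _ (hoverlay_ref Tε Tk) hTred
  have hMk2 : (Mk : ℝ) ≤ usn ^ ((1:ℝ)/s) * ε ^ (-(1:ℝ)/s) := by
    have := hoverlay Tε Tk
    linarith
  have hεpow : ε ^ (-(1:ℝ)/s) = e2 ^ (-(1:ℝ)/(2*s)) := by
    rw [← hsq, ← Real.rpow_natCast ε 2, ← Real.rpow_mul hε.le]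
    congr 1
    push_cast
    field_simp
  have he2pow : e2 ^ (-(1:ℝ)/(2*s))
      = (2 * C_E * C_A / (ν * c_A)) ^ ((1:ℝ)/(2*s)) * (toterr Tk) ^ (-(1:ℝ)/(2*s)) := by
    have h1 : e2 = (ν / K) * toterr Tk := by rw [he2def]; ring
    have hνK : (0:ℝ) < ν / K := by positivity
    rw [h1, Real.mul_rpow hνK.le htot.le]
    congr 1
    have h2 : (2 * C_E * C_A / (ν * c_A)) = (ν / K)⁻¹ := by
      rw [hKdef]; field_simp
    rw [h2, Real.inv_rpow hνK.le, ← Real.rpow_neg hνK.le, neg_div]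
  calc (Mk : ℝ) ≤ usn ^ ((1:ℝ)/s) * ε ^ (-(1:ℝ)/s) := hMk2
    _ = (2 * C_E * C_A / (ν * c_A)) ^ ((1:ℝ)/(2*s)) * usn ^ ((1:ℝ)/s) *
        (toterr Tk) ^ (-(1:ℝ)/(2*s)) := by rw [hεpow, he2pow]; ring
end

section
/- Let s > 0, and let (t_k) and (m_k) be sequences of nonnegative reals with t_k := #T_k − #T₀ ≤ C_S ∑_{i=0}^{k−1} m_i (complexity of refinement), m_i ≤ C₁ e_i^{−1/(2s)} (cardinality of marked sets), and e_i ≤ C₂ z_i² where z_{i+1} ≤ ρ z_i with 0 < ρ < 1, and e_k ≥ c₃ z_k² (two-sided comparability at the final step). Then there is a constant C, depending on C_S, C₁, C₂, c₃, ρ, s, such that e_k^{1/2} ≤ C (t_k)^{−s} for all k ≥ 1 with t_k > 0. -/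
/-!
Under the contraction `z (i+1) ≤ ρ z i` the quantities `z i ^ (-1/s)` grow at least
geometrically with ratio `ρ ^ (-1/s)`, so the sum of the marked-set bounds
`m i ≲ e i ^ (-1/(2s)) ≲ z i ^ (-1/s)` over `i < k` is dominated by its last term:
`t k ≲ z k ^ (-1/s)`. Inverting gives `z k ≲ t k ^ (-s)`, and `e k ≲ z k ^ 2` finishes.
-/

open Finset

theorem sum_range_le_div_mul_of_le_mul_succ {w : ℕ → ℝ} {r : ℝ} (hr0 : 0 ≤ r) (hr1 : r < 1)
    (hw0 : 0 ≤ w 0) (hw : ∀ i, w i ≤ r * w (i + 1)) (k : ℕ) :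
    ∑ i ∈ range k, w i ≤ r / (1 - r) * w k := by
  have h1r : 0 < 1 - r := sub_pos.mpr hr1
  induction k with
  | zero => simpa using mul_nonneg (div_nonneg hr0 h1r.le) hw0
  | succ k ih =>
    calc ∑ i ∈ range (k + 1), w i ≤ r / (1 - r) * w k + w k := by
          rw [sum_range_succ]; linarith
      _ = w k / (1 - r) := by field_simp; ring
      _ ≤ r * w (k + 1) / (1 - r) := by gcongr; exact hw k
      _ = r / (1 - r) * w (k + 1) := by ring

theorem Real.rpow_neg_le_mul_rpow_neg_of_le_mul {a b ρ q : ℝ} (hρ : 0 < ρ) (hb : 0 < b)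
    (hq : 0 ≤ q) (h : b ≤ ρ * a) : a ^ (-q) ≤ ρ ^ q * b ^ (-q) := by
  have ha : 0 ≤ a := (pos_of_mul_pos_right (hb.trans_le h) hρ.le).le
  calc a ^ (-q) = ρ ^ q * (ρ * a) ^ (-q) := by
        rw [Real.mul_rpow hρ.le ha, ← mul_assoc, ← Real.rpow_add hρ, add_neg_cancel,
          Real.rpow_zero, one_mul]
    _ ≤ ρ ^ q * b ^ (-q) :=
        mul_le_mul_of_nonneg_left (Real.rpow_le_rpow_of_nonpos hb h (neg_nonpos.mpr hq))
          (by positivity)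

theorem Real.rpow_le_mul_rpow_two_mul_of_mul_sq_le {c x e p : ℝ} (hc : 0 < c) (hx : 0 < x)
    (h : c * x ^ 2 ≤ e) (hp : p ≤ 0) : e ^ p ≤ c ^ p * x ^ (2 * p) := by
  calc e ^ p ≤ (c * x ^ 2) ^ p := Real.rpow_le_rpow_of_nonpos (by positivity) h hp
    _ = c ^ p * x ^ (2 * p) := by
        rw [Real.mul_rpow hc.le (by positivity), ← Real.rpow_natCast, ← Real.rpow_mul hx.le]
        norm_num

theorem Real.le_mul_rpow_neg_of_le_mul_rpow_neg_inv {t z A s : ℝ} (ht : 0 < t) (hz : 0 < z)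
    (hA : 0 ≤ A) (hs : 0 < s) (h : t ≤ A * z ^ (-s⁻¹)) : z ≤ A ^ s * t ^ (-s) := by
  have hts : t ^ s ≤ A ^ s / z := by
    calc t ^ s ≤ (A * z ^ (-s⁻¹)) ^ s := Real.rpow_le_rpow ht.le h hs.le
      _ = A ^ s / z := by
        rw [Real.mul_rpow hA (by positivity), ← Real.rpow_mul hz.le, neg_mul,
          inv_mul_cancel₀ hs.ne', Real.rpow_neg_one, div_eq_mul_inv]
  rw [Real.rpow_neg ht.le, ← div_eq_mul_inv, le_div_iff₀ (by positivity)]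
  rw [le_div_iff₀ hz] at hts
  linarith

theorem stmt16_general (s C_S C₁ C₂ c₃ ρ : ℝ) (t m e z : ℕ → ℝ)
    (hs : 0 < s) (hCS : 0 < C_S) (hC₁ : 0 < C₁) (hC₂ : 0 < C₂) (hc₃ : 0 < c₃)
    (hρ0 : 0 < ρ) (hρ1 : ρ < 1)
    (hz : ∀ k, 0 < z k)
    (ht : ∀ k, t k ≤ C_S * ∑ i ∈ Finset.range k, m i)
    (hm : ∀ i, m i ≤ C₁ * (e i) ^ (-(1:ℝ)/(2*s)))
    (he : ∀ i, e i ≤ C₂ * (z i)^2)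
    (hzcontr : ∀ i, z (i+1) ≤ ρ * z i)
    (hek : ∀ k, c₃ * (z k)^2 ≤ e k) :
    ∃ C > (0:ℝ), ∀ k ≥ 1, 0 < t k → (e k) ^ ((1:ℝ)/2) ≤ C * (t k) ^ (-s) := by
  set p := -(1:ℝ)/(2*s) with hp
  set r := ρ ^ s⁻¹
  have hr0 : 0 < r := Real.rpow_pos_of_pos hρ0 _
  have hr1 : r < 1 := Real.rpow_lt_one hρ0.le hρ1 (inv_pos.mpr hs)
  have hzr : ∀ i, z i ^ (-s⁻¹) ≤ r * z (i + 1) ^ (-s⁻¹) := fun i =>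
    Real.rpow_neg_le_mul_rpow_neg_of_le_mul hρ0 (hz _) (inv_nonneg.mpr hs.le) (hzcontr i)
  have hmz : ∀ i, m i ≤ C₁ * c₃ ^ p * z i ^ (-s⁻¹) := fun i => by
    have h2p : 2 * p = -s⁻¹ := by rw [hp]; field_simp
    calc m i ≤ C₁ * e i ^ p := hm i
      _ ≤ C₁ * (c₃ ^ p * z i ^ (2 * p)) := by
          gcongr
          exact Real.rpow_le_mul_rpow_two_mul_of_mul_sq_le hc₃ (hz i) (hek i)
            (div_nonpos_of_nonpos_of_nonneg (by norm_num) (by positivity))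
      _ = C₁ * c₃ ^ p * z i ^ (-s⁻¹) := by rw [h2p, mul_assoc]
  set A := C_S * (C₁ * c₃ ^ p) * (r / (1 - r))
  have htz : ∀ k, t k ≤ A * z k ^ (-s⁻¹) := fun k => calc
    t k ≤ C_S * ∑ i ∈ range k, m i := ht k
    _ ≤ C_S * ∑ i ∈ range k, C₁ * c₃ ^ p * z i ^ (-s⁻¹) := by gcongr with i; exact hmz i
    _ = C_S * (C₁ * c₃ ^ p) * ∑ i ∈ range k, z i ^ (-s⁻¹) := by rw [← mul_sum]; ring
    _ ≤ C_S * (C₁ * c₃ ^ p) * (r / (1 - r) * z k ^ (-s⁻¹)) := by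
        gcongr
        exact sum_range_le_div_mul_of_le_mul_succ hr0.le hr1
          (Real.rpow_pos_of_pos (hz 0) _).le hzr k
    _ = A * z k ^ (-s⁻¹) := by ring
  refine ⟨√C₂ * A ^ s, by positivity, fun k _ htk => ?_⟩
  calc e k ^ ((1:ℝ)/2) = √(e k) := (Real.sqrt_eq_rpow _).symm
    _ ≤ √(C₂ * z k ^ 2) := Real.sqrt_le_sqrt (he k)
    _ = √C₂ * z k := by rw [Real.sqrt_mul hC₂.le, Real.sqrt_sq (hz k).le]
    _ ≤ √C₂ * (A ^ s * t k ^ (-s)) := by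
        gcongr
        exact Real.le_mul_rpow_neg_of_le_mul_rpow_neg_inv htk (hz k) (by positivity) hs (htz k)
    _ = √C₂ * A ^ s * t k ^ (-s) := by ring

/-- Abstract quasi-optimality: combining the refinement complexity bound, the
cardinality bound for marked sets, the contraction, and comparability of the total
error with the contracted quantity yields the optimal rate `e_k^{1/2} ≤ C t_k^{-s}`. -/
theorem stmt16 (s C_S C₁ C₂ c₃ ρ : ℝ) (t m e z : ℕ → ℝ)
    (hs : 0 < s) (hCS : 0 < C_S) (hC₁ : 0 < C₁) (hC₂ : 0 < C₂) (hc₃ : 0 < c₃)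
    (hρ0 : 0 < ρ) (hρ1 : ρ < 1)
    (ht0 : ∀ k, 0 ≤ t k) (hm0 : ∀ k, 0 ≤ m k) (hz : ∀ k, 0 < z k)
    (ht : ∀ k, t k ≤ C_S * ∑ i ∈ Finset.range k, m i)
    (hm : ∀ i, m i ≤ C₁ * (e i) ^ (-(1:ℝ)/(2*s)))
    (he : ∀ i, e i ≤ C₂ * (z i)^2)
    (hzcontr : ∀ i, z (i+1) ≤ ρ * z i)
    (hek : ∀ k, c₃ * (z k)^2 ≤ e k) :
    ∃ C > (0:ℝ), ∀ k ≥ 1, 0 < t k → (e k) ^ ((1:ℝ)/2) ≤ C * (t k) ^ (-s) :=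
  stmt16_general s C_S C₁ C₂ c₃ ρ t m e z hs hCS hC₁ hC₂ hc₃ hρ0 hρ1 hz ht hm he hzcontr hek
end
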